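/- There exists a subgroup G of Sym(10) that is minimally embedded (i.e., G admits no injective group homomorphism into Sym(k) for any k < 10) and a nontrivial subgroup K of the centralizer of G in Sym(10) such that K intersects G trivially. -/

import Mathlib

/-!
Take `G` to be the even part `A` (order 80) of the wreath product
`C₂ ≀ C₅ = (ZMod 5 → ZMod 2) ⋊ ZMod 5`, acting on the five blocks `{i} × ZMod 2` of
`ZMod 5 × ZMod 2`. The element flipping every block is central in `C₂ ≀ C₅` and odd, so it
generates a `K` of order 2 centralising `A` and meeting it trivially.

For minimality: since `X⁴ + X³ + X² + X + 1` is irreducible over `𝔽₂`, the shifts of any nonzero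
even vector span all even vectors; with a commutator argument this shows that every nontrivial
normal subgroup of `A` contains `flipPair`, an element of the base `E ≅ C₂⁴`. A faithful action
on `k` points moves `flipPair`, and the stabiliser `H` of a moved point has index `≤ k`. If
`H ⊄ E`, then `H ⊓ E` is normal (`E` is abelian of prime index), hence trivial, so `|H| ≤ 5` and
the index is at least 16; if `H ≤ E`, index at most 9 forces `H = E ∋ flipPair`.
-/

open Equiv

section General

variable {G : Type*} [Group G]

theorem Subgroup.exists_notMem_index_le_card {α : Type*} [Finite α] {φ : G →* Perm α}
    (hφ : Function.Injective φ) {z : G} (hz : z ≠ 1) :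
    ∃ H : Subgroup G, z ∉ H ∧ H.index ≤ Nat.card α := by
  obtain ⟨x, hx⟩ : ∃ x, φ z x ≠ x := by
    by_contra! h
    exact hz (hφ (by ext x; simp [h]))
  let _ : MulAction G α := MulAction.compHom α φ
  refine ⟨MulAction.stabilizer G x, hx, ?_⟩
  rw [MulAction.index_stabilizer]
  exact Set.ncard_le_card _

theorem Subgroup.normal_inf_of_not_le {E H : Subgroup G} [E.Normal] [IsMulCommutative E]
    (hE : E.index.Prime) (hHE : ¬ H ≤ E) : (H ⊓ E).Normal := by
  set K := normalizer ((H ⊓ E : Subgroup G) : Set G)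
  have hHK : H ≤ K :=
    (le_inf H.le_normalizer le_normalizer_of_normal).trans inf_normalizer_le_normalizer_inf
  have hEK : E ≤ K := by
    rw [le_normalizer_iff]
    intro e he k hk
    rwa [setLike_mul_comm he hk.2, mul_inv_cancel_right]
  have hK : K.index = 1 := by
    have := relIndex_mul_index hEK
    rcases (Nat.dvd_prime hE).mp (Dvd.intro_left _ this) with h | h
    · exact h
    · rw [h, Nat.mul_eq_right hE.ne_zero, relIndex_eq_one] at this
      exact absurd (hHK.trans this) hHE
  exact normalizer_eq_top_iff.mp (index_eq_one.mp hK)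

theorem Subgroup.zpowers_inf_eq_bot_of_orderOf_prime {z : G} (hz : (orderOf z).Prime)
    {H : Subgroup G} (hzH : z ∉ H) : zpowers z ⊓ H = ⊥ := by
  have : Fact (Nat.card (zpowers z)).Prime := ⟨Nat.card_zpowers z ▸ hz⟩
  rcases (H.subgroupOf (zpowers z)).eq_bot_or_eq_top_of_prime_card with h | h
  · rwa [subgroupOf_eq_bot, disjoint_iff, inf_comm] at h
  · rw [subgroupOf_eq_top] at h
    exact absurd (h (mem_zpowers z)) hzH

end General

/-- `⟨v, s⟩` is `v ⋊ s`: first shift by `s`, then flip the blocks where `v` is 1. -/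
@[ext] structure Wreath where
  v : ZMod 5 → ZMod 2
  s : ZMod 5
deriving DecidableEq, Fintype

namespace Wreath

def shift (u : ZMod 5 → ZMod 2) (t : ZMod 5) : ZMod 5 → ZMod 2 := fun i => u (i - t)

lemma shift_apply (u : ZMod 5 → ZMod 2) (t i : ZMod 5) : shift u t i = u (i - t) := rfl

@[simp] lemma shift_zero (u : ZMod 5 → ZMod 2) : shift u 0 = u := by
  ext; simp [shift_apply]

lemma sum_shift (u : ZMod 5 → ZMod 2) (t : ZMod 5) : ∑ i, shift u t i = ∑ i, u i :=
  Fintype.sum_equiv (Equiv.subRight t) _ _ fun _ => rfl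

instance : Mul Wreath := ⟨fun a b => ⟨a.v + shift b.v a.s, a.s + b.s⟩⟩
instance : One Wreath := ⟨⟨0, 0⟩⟩
instance : Inv Wreath := ⟨fun a => ⟨-shift a.v (-a.s), -a.s⟩⟩

@[simp] lemma mul_v (a b : Wreath) : (a * b).v = a.v + shift b.v a.s := rfl
@[simp] lemma mul_s (a b : Wreath) : (a * b).s = a.s + b.s := rfl
@[simp] lemma one_v : (1 : Wreath).v = 0 := rfl
@[simp] lemma one_s : (1 : Wreath).s = 0 := rfl
@[simp] lemma inv_v (a : Wreath) : a⁻¹.v = -shift a.v (-a.s) := rfl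
@[simp] lemma inv_s (a : Wreath) : a⁻¹.s = -a.s := rfl

instance : Group Wreath where
  mul_assoc a b c := by
    ext i
    · simp only [mul_v, mul_s, Pi.add_apply, shift_apply, sub_add_eq_sub_sub, add_assoc]
    · simp only [mul_s]; ring
  one_mul a := by ext <;> simp
  mul_one a := by ext <;> simp [shift_apply]
  inv_mul_cancel a := by
    ext : 1 <;> simp only [mul_v, mul_s, inv_v, inv_s, one_v, one_s, neg_add_cancel]

lemma mk_add (u w : ZMod 5 → ZMod 2) : (⟨u + w, 0⟩ : Wreath) = ⟨u, 0⟩ * ⟨w, 0⟩ := by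
  ext : 1 <;> simp

lemma mk_neg (u : ZMod 5 → ZMod 2) : (⟨-u, 0⟩ : Wreath) = (⟨u, 0⟩)⁻¹ := by
  ext : 1 <;> simp

lemma conj_mk (a : Wreath) (u : ZMod 5 → ZMod 2) : a * ⟨u, 0⟩ * a⁻¹ = ⟨shift u a.s, 0⟩ := by
  ext i
  · simp only [mul_v, inv_v, mul_s, Pi.add_apply, Pi.neg_apply, shift_apply, add_zero,
      sub_neg_eq_add, sub_add_cancel]
    abel
  · simp

def shiftHom : Wreath →* Multiplicative (ZMod 5) where
  toFun a := Multiplicative.ofAdd a.s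
  map_one' := rfl
  map_mul' _ _ := rfl

def toPerm : Wreath →* Perm (ZMod 5 × ZMod 2) where
  toFun a :=
    { toFun p := (p.1 + a.s, p.2 + a.v (p.1 + a.s))
      invFun p := (p.1 - a.s, p.2 - a.v p.1)
      left_inv p := by ext <;> simp
      right_inv p := by ext <;> simp }
  map_one' := by ext p <;> simp
  map_mul' a b := by
    ext p
    · simp [add_assoc, add_comm b.s a.s]
    · simp only [coe_fn_mk, Perm.coe_mul, Function.comp_apply, mul_v, mul_s, Pi.add_apply,
        shift_apply, add_right_comm _ a.s b.s, add_sub_cancel_right, ← add_assoc]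
      ring

lemma toPerm_injective : Function.Injective toPerm := by
  intro a b h
  have hs : a.s = b.s := by simpa [toPerm] using congrArg (fun e => (e (0, 0)).1) h
  ext i
  · simpa [toPerm, hs] using congrArg (fun e => (e (i - a.s, 0)).2) h
  · exact hs

def even : Subgroup Wreath where
  carrier := {a | ∑ i, a.v i = 0}
  mul_mem' {a b} ha hb := by
    simp only [Set.mem_ofPred_eq, mul_v, Pi.add_apply, Finset.sum_add_distrib, sum_shift] at *
    rw [ha, hb, add_zero]
  one_mem' := by simp
  inv_mem' {a} ha := by
    simp only [Set.mem_ofPred_eq, inv_v, Pi.neg_apply, Finset.sum_neg_distrib, sum_shift] at *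
    rw [ha, neg_zero]

lemma mem_even {a : Wreath} : a ∈ even ↔ ∑ i, a.v i = 0 := Iff.rfl

instance : DecidablePred (· ∈ even) := fun _ => decidable_of_iff _ mem_even.symm

lemma card_even : Nat.card even = 80 := by
  rw [Nat.card_eq_fintype_card]
  decide

def evenBase : Subgroup even := (shiftHom.comp even.subtype).ker

instance : evenBase.Normal := MonoidHom.normal_ker _

lemma mem_evenBase {a : even} : a ∈ evenBase ↔ (a : Wreath).s = 0 := by
  simp [evenBase, shiftHom]

instance : DecidablePred (· ∈ evenBase) := fun _ => decidable_of_iff _ mem_evenBase.symm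

instance : IsMulCommutative evenBase :=
  ⟨⟨fun a b => by
    have ha := mem_evenBase.mp a.2
    have hb := mem_evenBase.mp b.2
    ext : 3 <;> simp [ha, hb, add_comm]⟩⟩

lemma card_evenBase : Nat.card evenBase = 16 := by
  rw [Nat.card_eq_fintype_card]
  decide

lemma index_evenBase : evenBase.index = 5 := by
  have := evenBase.card_mul_index
  rw [card_evenBase, card_even] at this
  omega

def flipPair : Wreath := ⟨fun i => if i = 0 ∨ i = 1 then 1 else 0, 0⟩

def flipPairEven : even := ⟨flipPair, by decide⟩

lemma flipPairEven_ne_one : flipPairEven ≠ 1 := by decide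

lemma flipPairEven_mem_evenBase : flipPairEven ∈ evenBase := mem_evenBase.mpr rfl

lemma exists_even_shift_ne (s : ZMod 5) (hs : s ≠ 0) :
    ∃ u : ZMod 5 → ZMod 2, ∑ i, u i = 0 ∧ shift u s ≠ u := by
  revert s; decide

lemma exists_sum_shift_eq_flipPair (u : ZMod 5 → ZMod 2) (hu : ∑ i, u i = 0) (hu0 : u ≠ 0) :
    ∃ c : ZMod 5 → ZMod 2, ∑ t, c t • shift u t = flipPair.v := by
  revert u; decide

def baseVectors (N : Subgroup Wreath) : AddSubgroup (ZMod 5 → ZMod 2) where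
  carrier := {u | (⟨u, 0⟩ : Wreath) ∈ N}
  add_mem' {u w} hu hw := by
    rw [Set.mem_ofPred_eq, mk_add]
    exact N.mul_mem hu hw
  zero_mem' := N.one_mem
  neg_mem' {u} hu := by
    rw [Set.mem_ofPred_eq, mk_neg]
    exact N.inv_mem hu

lemma shift_mem_baseVectors (N : Subgroup even) [N.Normal] {u : ZMod 5 → ZMod 2}
    (hu : u ∈ baseVectors (N.map even.subtype)) (t : ZMod 5) :
    shift u t ∈ baseVectors (N.map even.subtype) := by
  obtain ⟨n, hn, hnu⟩ := hu
  let g : even := ⟨⟨0, t⟩, by simp [mem_even]⟩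
  refine ⟨g * n * g⁻¹, ‹N.Normal›.conj_mem n hn g, ?_⟩
  simp only [Subgroup.coe_subtype, Subgroup.coe_mul, Subgroup.coe_inv] at hnu ⊢
  rw [hnu, conj_mk]

lemma exists_ne_zero_mem_baseVectors (N : Subgroup even) [N.Normal] (hN : N ≠ ⊥) :
    ∃ u ≠ 0, u ∈ baseVectors (N.map even.subtype) := by
  obtain ⟨n, hn, hn1⟩ := N.bot_or_exists_ne_one.resolve_left hN
  by_cases hs : (n : Wreath).s = 0
  · exact ⟨(n : Wreath).v, fun hv => hn1 (Subtype.ext (Wreath.ext hv hs)), n, hn,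
      Wreath.ext rfl hs⟩
  · obtain ⟨u, hu, hsu⟩ := exists_even_shift_ne _ hs
    let e : even := ⟨⟨u, 0⟩, hu⟩
    refine ⟨shift u (n : Wreath).s - u, sub_ne_zero.mpr hsu, n * e * n⁻¹ * e⁻¹, ?_, ?_⟩
    · simpa [mul_assoc] using N.mul_mem hn (‹N.Normal›.conj_mem _ (N.inv_mem hn) e)
    · simp only [Subgroup.coe_subtype, Subgroup.coe_mul, Subgroup.coe_inv]
      rw [sub_eq_add_neg, mk_add, mk_neg, conj_mk]

lemma flipPairEven_mem_of_normal (N : Subgroup even) [N.Normal] (hN : N ≠ ⊥) :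
    flipPairEven ∈ N := by
  obtain ⟨u, hu0, hu⟩ := exists_ne_zero_mem_baseVectors N hN
  have hu_even : ∑ i, u i = 0 := by
    obtain ⟨n, -, hn⟩ := hu
    rw [Subgroup.coe_subtype] at hn
    exact mem_even.mp (hn ▸ n.2)
  let S := AddSubgroup.toZModSubmodule 2 (baseVectors (N.map even.subtype))
  have hspan : Submodule.span (ZMod 2) (Set.range (shift u)) ≤ S :=
    Submodule.span_le.mpr (Set.range_subset_iff.mpr (shift_mem_baseVectors N hu))
  have : flipPair.v ∈ S :=
    hspan ((Submodule.mem_span_range_iff_exists_fun _).mpr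
      (exists_sum_shift_eq_flipPair u hu_even hu0))
  exact (Subgroup.mem_map_iff_mem even.subtype_injective).mp this

lemma lt_index_of_flipPairEven_notMem (H : Subgroup even) (hH : flipPairEven ∉ H) :
    9 < H.index := by
  have hcard := H.card_mul_index
  rw [card_even] at hcard
  by_cases hHE : H ≤ evenBase
  · have hdvd : Nat.card H ∣ 16 := card_evenBase ▸ Subgroup.card_dvd_of_le hHE
    by_contra! hle
    have h16 : Nat.card H = 16 := by
      have : 9 ≤ Nat.card H := by nlinarith
      have := Nat.le_of_dvd (by norm_num) hdvd
      interval_cases h : Nat.card H <;> omega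
    have : H = evenBase := Subgroup.eq_of_le_of_card_ge hHE (by rw [h16, card_evenBase])
    exact hH (this ▸ flipPairEven_mem_evenBase)
  · have := Subgroup.normal_inf_of_not_le (index_evenBase ▸ Nat.prime_five) hHE
    have hbot : H ⊓ evenBase = ⊥ := by
      by_contra hne
      exact hH (flipPairEven_mem_of_normal _ hne).1
    have hinj : Function.Injective ((shiftHom.comp even.subtype).domRestrict H) := by
      rw [← MonoidHom.ker_eq_bot_iff, MonoidHom.ker_domRestrict, Subgroup.subgroupOf_eq_bot,
        disjoint_iff, inf_comm]
      exact hbot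
    have h5 : Nat.card H ≤ 5 := (Nat.card_le_card_of_injective _ hinj).trans_eq (by simp)
    nlinarith

lemma not_injective_of_lt_ten {k : ℕ} (hk : k < 10) (φ : even →* Perm (Fin k)) :
    ¬ Function.Injective φ := fun hφ => by
  obtain ⟨H, hH, hindex⟩ := Subgroup.exists_notMem_index_le_card hφ flipPairEven_ne_one
  have := lt_index_of_flipPairEven_notMem H hH
  rw [Nat.card_eq_fintype_card, Fintype.card_fin] at hindex
  omega

def flipAll : Wreath := ⟨1, 0⟩

lemma flipAll_mul_comm (a : Wreath) : flipAll * a = a * flipAll := by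
  ext i
  · simp [flipAll, shift_apply, add_comm]
  · simp [flipAll]

lemma orderOf_flipAll : orderOf flipAll = 2 := by
  refine orderOf_eq_prime ?_ (fun h => by simpa [flipAll] using congrArg (fun a => a.v 0) h)
  ext <;> simp [pow_two, flipAll]
  decide

lemma flipAll_notMem_even : flipAll ∉ even := by decide

end Wreath

open Wreath in
theorem exists_deg_ten_minimal_with_nontrivial_complement :
    ∃ G : Subgroup (Equiv.Perm (Fin 10)),
      (∀ k < 10, ∀ φ : G →* Equiv.Perm (Fin k), ¬ Function.Injective φ) ∧
      ∃ K : Subgroup (Equiv.Perm (Fin 10)),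
        K ≤ Subgroup.centralizer (G : Set (Equiv.Perm (Fin 10))) ∧ K ≠ ⊥ ∧ K ⊓ G = ⊥ := by
  let F : Wreath →* Perm (Fin 10) := (permCongrHom finProdFinEquiv).toMonoidHom.comp toPerm
  have hF : Function.Injective F := (permCongrHom _).injective.comp toPerm_injective
  have horder : orderOf (F flipAll) = 2 := by rw [orderOf_injective F hF, orderOf_flipAll]
  refine ⟨even.map F, fun k hk φ hφ => ?_, Subgroup.zpowers (F flipAll), ?_, ?_, ?_⟩
  · let e := Subgroup.equivMapOfInjective even F hF
    exact not_injective_of_lt_ten hk (φ.comp e.toMonoidHom) (hφ.comp e.injective)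
  · rw [Subgroup.zpowers_le, Subgroup.mem_centralizer_iff]
    rintro _ ⟨a, -, rfl⟩
    rw [← map_mul, ← map_mul, flipAll_mul_comm]
  · rw [Ne, Subgroup.zpowers_eq_bot, ← orderOf_eq_one_iff, horder]
    decide
  · refine Subgroup.zpowers_inf_eq_bot_of_orderOf_prime (horder ▸ Nat.prime_two) ?_
    rw [Subgroup.mem_map_iff_mem hF]
    exact flipAll_notMem_even
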